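/- Let d ≥ 1 and N ≥ 1. There exists a symmetric positive semidefinite d(N+1) × d(N+1) real matrix R such that for all x₀,…,x_N ∈ ℝ^d, 𝒞(x₀,…,x_N) = xᵀRx, where x ∈ ℝ^{d(N+1)} is the concatenation of x₀,…,x_N. In particular, 𝒞 is a continuous, nonnegative quadratic form on (ℝ^d)^{N+1}. -/

import Mathlib

/-!
`𝒞` is the infimum of the bending energy `∫₀^N ‖X''‖²` over a fibre of the linear sampling map
`X ↦ (X i)ᵢ` on C² curves; the fibres are nonempty by Lagrange interpolation. The energy obeys the
parallelogram law and is 2-homogeneous, and both properties pass to infima over the fibres of a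
surjective linear map. A nonnegative functional with these two properties is a quadratic form
(Jordan–von Neumann: its polar form is additive by the parallelogram law, and ℝ-homogeneous because
`t ↦ polar (t • x) y` is additive and bounded near `0`). `R` is its matrix in the coordinate basis.
-/

open MeasureTheory Matrix

noncomputable section

/-- `𝒞(x₀,…,x_N)`: the infimum of `∫₀^N ‖X''‖²` over all C² curves `X` with
`X(i) = x i` for every `i = 0, …, N`. -/
def multiCost {d : ℕ} (N : ℕ) (x : Fin (N + 1) → EuclideanSpace ℝ (Fin d)) : ℝ :=
  sInf { y : ℝ | ∃ X : ℝ → EuclideanSpace ℝ (Fin d), ContDiff ℝ 2 X ∧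
      (∀ i : Fin (N + 1), X ((i : ℕ) : ℝ) = x i) ∧
      y = ∫ t in (0:ℝ)..(N:ℝ), ‖deriv (deriv X) t‖ ^ 2 }

open QuadraticMap (polar)

section Parallelogram

variable {V : Type*} [AddCommGroup V] {f : V → ℝ}
  (hpar : ∀ x y, f (x + y) + f (x - y) = 2 * f x + 2 * f y)
include hpar

theorem polar_add_left_of_parallelogram (x x' y : V) :
    polar f (x + x') y = polar f x y + polar f x' y := by
  -- these add up to `f (x + x' + y) + f x + f x' + f y = f (x + x') + f (x + y) + f (x' + y)`
  have h₁ := hpar (x + y) x'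
  have h₂ := hpar (x' + y) x
  have h₃ := hpar y (x - x')
  have h₄ := hpar x x'
  rw [show x + y + x' = x + x' + y by abel, show x + y - x' = y + (x - x') by abel] at h₁
  rw [show x' + y + x = x + x' + y by abel, show x' + y - x = y - (x - x') by abel] at h₂
  simp only [QuadraticMap.polar]
  linarith

variable (hnonneg : ∀ x, 0 ≤ f x)
include hnonneg

theorem abs_polar_le_of_parallelogram (x y : V) : |polar f x y| ≤ f x + f y := by
  have := hpar x y
  have := hnonneg (x + y)
  have := hnonneg (x - y)
  rw [QuadraticMap.polar, abs_le]
  constructor <;> linarith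

variable [Module ℝ V] (hsmul : ∀ (a : ℝ) x, f (a • x) = a ^ 2 * f x)
include hsmul

-- An additive map `ℝ → ℝ` that is bounded near `0` is continuous, hence `ℝ`-linear.
theorem polar_smul_left_of_parallelogram (a : ℝ) (x y : V) :
    polar f (a • x) y = a * polar f x y := by
  let g : ℝ →+ ℝ := AddMonoidHom.mk' (fun t => polar f (t • x) y) fun s t => by
    simp only [add_smul, polar_add_left_of_parallelogram hpar]
  have hg : Continuous g := by
    refine g.continuous_of_isBounded_nhds_zero (Icc_mem_nhds neg_one_lt_zero one_pos)
      ((Metric.isBounded_Icc (-(f x + f y)) (f x + f y)).subset ?_)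
    rintro _ ⟨t, ht, rfl⟩
    have hft : f (t • x) ≤ f x := by
      rw [hsmul]
      exact mul_le_of_le_one_left (hnonneg x) (sq_le_one_iff_abs_le_one t |>.2 (abs_le.2 ht))
    exact abs_le.1 ((abs_polar_le_of_parallelogram hpar hnonneg _ y).trans (by linarith))
  simpa [g] using map_real_smul g hg a 1

def QuadraticForm.ofParallelogram : QuadraticForm ℝ V :=
  QuadraticMap.ofPolar f (fun a x => by rw [hsmul, smul_eq_mul, sq])
    (polar_add_left_of_parallelogram hpar) (polar_smul_left_of_parallelogram hpar hnonneg hsmul)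

end Parallelogram

namespace QuadraticForm

variable {R M ι : Type*} [CommRing R] [Invertible (2 : R)] [AddCommGroup M] [Module R M]
  [Fintype ι] [DecidableEq ι]

theorem apply_eq_dotProduct_toMatrix_mulVec (Q : QuadraticForm R M) (b : Module.Basis ι R M)
    (x : M) : Q x = b.equivFun x ⬝ᵥ Q.toMatrix b *ᵥ b.equivFun x := by
  rw [← QuadraticMap.associated_eq_self_apply R, toMatrix,
    apply_eq_dotProduct_toMatrix₂_mulVec b b]
  rfl

theorem posSemidef_toMatrix [StarRing R] [TrivialStar R] [PartialOrder R] {Q : QuadraticForm R M}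
    (b : Module.Basis ι R M) (hQ : ∀ x, 0 ≤ Q x) : (Q.toMatrix b).PosSemidef := by
  refine Matrix.posSemidef_iff_dotProduct_mulVec.2 ⟨?_, fun v => ?_⟩
  · exact Matrix.isHermitian_iff_isSymm.2 (isSymm_toMatrix b Q)
  · rw [star_trivial]
    have := hQ (b.equivFun.symm v)
    rwa [apply_eq_dotProduct_toMatrix_mulVec Q b, LinearEquiv.apply_symm_apply] at this

theorem continuous_of_finiteDimensional {V : Type*} [AddCommGroup V] [Module ℝ V]
    [TopologicalSpace V] [IsTopologicalAddGroup V] [ContinuousSMul ℝ V] [T2Space V]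
    [FiniteDimensional ℝ V] (Q : QuadraticForm ℝ V) : Continuous Q := by
  let b := Module.finBasis ℝ V
  have hb : Continuous b.equivFun :=
    LinearMap.continuous_of_finiteDimensional b.equivFun.toLinearMap
  simp_rw [funext (apply_eq_dotProduct_toMatrix_mulVec Q b)]
  exact hb.dotProduct (continuous_const.matrix_mulVec hb)

end QuadraticForm

open scoped Pointwise

section FibreInf

variable {W V : Type*} [AddCommGroup W] [Module ℝ W] [AddCommGroup V] [Module ℝ V]

def fibreInf (q : W → ℝ) (L : W →ₗ[ℝ] V) (v : V) : ℝ :=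
  sInf (q '' (L ⁻¹' {v}))

variable {q : W → ℝ} {L : W →ₗ[ℝ] V}

theorem fibreInf_nonneg (hq : ∀ X, 0 ≤ q X) (v : V) : 0 ≤ fibreInf q L v :=
  Real.sInf_nonneg (by rintro _ ⟨X, -, rfl⟩; exact hq X)

theorem fibreInf_le (hq : ∀ X, 0 ≤ q X) {X : W} {v : V} (hX : L X = v) :
    fibreInf q L v ≤ q X :=
  csInf_le ⟨0, by rintro _ ⟨Y, -, rfl⟩; exact hq Y⟩ ⟨X, hX, rfl⟩

theorem le_fibreInf (hL : Function.Surjective L) {c : ℝ} {v : V} (h : ∀ X, L X = v → c ≤ q X) :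
    c ≤ fibreInf q L v :=
  le_csInf ((show (L ⁻¹' {v}).Nonempty from hL v).image q)
    (by rintro _ ⟨X, hX, rfl⟩; exact h X hX)

theorem fibreInf_smul (hq : ∀ X, 0 ≤ q X) (hsmul : ∀ (a : ℝ) X, q (a • X) = a ^ 2 * q X)
    (a : ℝ) (v : V) : fibreInf q L (a • v) = a ^ 2 * fibreInf q L v := by
  rcases eq_or_ne a 0 with rfl | ha
  · have hq0 : q 0 = 0 := by simpa using hsmul 0 0
    simpa using le_antisymm (hq0 ▸ fibreInf_le hq (map_zero L)) (fibreInf_nonneg hq 0)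
  have hfibre : q '' (L ⁻¹' {a • v}) = (a ^ 2) • q '' (L ⁻¹' {v}) := by
    ext y
    simp only [Set.mem_smul_set, Set.mem_image, Set.mem_preimage, Set.mem_singleton_iff,
      smul_eq_mul]
    constructor
    · rintro ⟨Y, hY, rfl⟩
      refine ⟨q (a⁻¹ • Y), ⟨a⁻¹ • Y, by simp [hY, ha], rfl⟩, ?_⟩
      rw [hsmul, ← mul_assoc, ← mul_pow, mul_inv_cancel₀ ha, one_pow, one_mul]
    · rintro ⟨_, ⟨X, hX, rfl⟩, rfl⟩
      exact ⟨a • X, by simp [hX], hsmul a X⟩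
  rw [fibreInf, hfibre, Real.sInf_smul_of_nonneg (sq_nonneg a), smul_eq_mul, fibreInf]

variable (hL : Function.Surjective L) (hq : ∀ X, 0 ≤ q X)
  (hpar : ∀ X Y, q (X + Y) + q (X - Y) = 2 * q X + 2 * q Y)
include hL hq hpar

theorem fibreInf_add_add_sub_le (u w : V) :
    fibreInf q L (u + w) + fibreInf q L (u - w) ≤ 2 * fibreInf q L u + 2 * fibreInf q L w := by
  set S := fibreInf q L (u + w) + fibreInf q L (u - w)
  have hpair : ∀ X Y, L X = u → L Y = w → S ≤ 2 * q X + 2 * q Y := by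
    intro X Y hX hY
    rw [← hpar]
    exact add_le_add (fibreInf_le hq (by simp [hX, hY])) (fibreInf_le hq (by simp [hX, hY]))
  have hbound : ∀ Y, L Y = w → S ≤ 2 * fibreInf q L u + 2 * q Y := by
    intro Y hY
    have := le_fibreInf (q := q) hL (v := u) (c := (S - 2 * q Y) / 2) fun X hX => by
      linarith [hpair X Y hX hY]
    linarith
  have := le_fibreInf (q := q) hL (v := w) (c := (S - 2 * fibreInf q L u) / 2) fun Y hY => by
    linarith [hbound Y hY]
  linarith

theorem fibreInf_add_add_sub (hsmul : ∀ (a : ℝ) X, q (a • X) = a ^ 2 * q X) (u w : V) :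
    fibreInf q L (u + w) + fibreInf q L (u - w) = 2 * fibreInf q L u + 2 * fibreInf q L w := by
  refine le_antisymm (fibreInf_add_add_sub_le hL hq hpar u w) ?_
  -- the reverse inequality is the same one at `(u + w, u - w)`, rescaled by 2-homogeneity
  have h := fibreInf_add_add_sub_le hL hq hpar (u + w) (u - w)
  rw [show u + w + (u - w) = (2 : ℝ) • u by module, show u + w - (u - w) = (2 : ℝ) • w by module,
    fibreInf_smul hq hsmul, fibreInf_smul hq hsmul] at h
  linarith

end FibreInf

section BendingEnergy

variable {F : Type*} [NormedAddCommGroup F] [InnerProductSpace ℝ F]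

def bendingEnergy (T : ℝ) (X : ℝ → F) : ℝ :=
  ∫ t in 0..T, ‖iteratedDeriv 2 X t‖ ^ 2

variable {T : ℝ} {X Y : ℝ → F}

theorem bendingEnergy_nonneg (hT : 0 ≤ T) : 0 ≤ bendingEnergy T X :=
  intervalIntegral.integral_nonneg hT fun _ _ => sq_nonneg _

theorem bendingEnergy_smul (a : ℝ) (X : ℝ → F) :
    bendingEnergy T (a • X) = a ^ 2 * bendingEnergy T X := by
  simp only [bendingEnergy, iteratedDeriv_const_smul_field, norm_smul, mul_pow, Real.norm_eq_abs,
    sq_abs, intervalIntegral.integral_const_mul]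

theorem intervalIntegrable_norm_iteratedDeriv_two_sq (hX : ContDiff ℝ 2 X) (a b : ℝ) :
    IntervalIntegrable (fun t => ‖iteratedDeriv 2 X t‖ ^ 2) volume a b :=
  ((hX.continuous_iteratedDeriv 2 le_rfl).norm.pow 2).intervalIntegrable a b

theorem bendingEnergy_add_add_sub (hX : ContDiff ℝ 2 X) (hY : ContDiff ℝ 2 Y) :
    bendingEnergy T (X + Y) + bendingEnergy T (X - Y) =
      2 * bendingEnergy T X + 2 * bendingEnergy T Y := by
  have parallelogram (t : ℝ) :
      ‖iteratedDeriv 2 (X + Y) t‖ ^ 2 + ‖iteratedDeriv 2 (X - Y) t‖ ^ 2 =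
        2 * ‖iteratedDeriv 2 X t‖ ^ 2 + 2 * ‖iteratedDeriv 2 Y t‖ ^ 2 := by
    rw [iteratedDeriv_add hX.contDiffAt hY.contDiffAt,
      iteratedDeriv_sub hX.contDiffAt hY.contDiffAt]
    linear_combination parallelogram_law_with_norm ℝ (iteratedDeriv 2 X t) (iteratedDeriv 2 Y t)
  have hXY : ContDiff ℝ 2 (X + Y) := hX.add hY
  have hXY' : ContDiff ℝ 2 (X - Y) := hX.sub hY
  simp only [bendingEnergy]
  rw [← intervalIntegral.integral_add (intervalIntegrable_norm_iteratedDeriv_two_sq hXY _ _)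
      (intervalIntegrable_norm_iteratedDeriv_two_sq hXY' _ _),
    ← intervalIntegral.integral_const_mul, ← intervalIntegral.integral_const_mul,
    ← intervalIntegral.integral_add
      ((intervalIntegrable_norm_iteratedDeriv_two_sq hX _ _).const_mul 2)
      ((intervalIntegrable_norm_iteratedDeriv_two_sq hY _ _).const_mul 2)]
  exact intervalIntegral.integral_congr fun t _ => parallelogram t

end BendingEnergy

section Interpolation

variable (F : Type*) [NormedAddCommGroup F] [NormedSpace ℝ F]

def contDiffSubmodule (n : WithTop ℕ∞) : Submodule ℝ (ℝ → F) where
  carrier := {X | ContDiff ℝ n X}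
  add_mem' := ContDiff.add
  zero_mem' := contDiff_const
  smul_mem' c _ hX := hX.const_smul c

variable {F} {ι : Type*} {n : WithTop ℕ∞}

def sampleAt (v : ι → ℝ) : contDiffSubmodule F n →ₗ[ℝ] ι → F where
  toFun X i := (X : ℝ → F) (v i)
  map_add' _ _ := rfl
  map_smul' _ _ := rfl

theorem exists_contDiff_interpolant [Fintype ι] [DecidableEq ι] {v : ι → ℝ}
    (hv : Function.Injective v) (x : ι → F) :
    ∃ X : ℝ → F, ContDiff ℝ n X ∧ ∀ i, X (v i) = x i := by
  refine ⟨fun t => ∑ i, (Lagrange.basis Finset.univ v i).eval t • x i,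
    ContDiff.sum fun i _ => ?_, fun j => ?_⟩
  · have hp : ContDiff ℝ n fun t => (Lagrange.basis Finset.univ v i).eval t := by
      simpa using (Lagrange.basis Finset.univ v i).contDiff_aeval (𝕜 := ℝ) n
    exact hp.smul contDiff_const
  · dsimp only
    rw [Finset.sum_eq_single j (fun i _ hij => by
      rw [Lagrange.eval_basis_of_ne hij (Finset.mem_univ j), zero_smul]) (by simp)]
    rw [Lagrange.eval_basis_self hv.injOn (Finset.mem_univ j), one_smul]

theorem sampleAt_surjective [Finite ι] {v : ι → ℝ} (hv : Function.Injective v) :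
    Function.Surjective (sampleAt (F := F) (n := n) v) := fun x => by
  have := Fintype.ofFinite ι
  classical
  obtain ⟨X, hX, hXv⟩ := exists_contDiff_interpolant hv x
  exact ⟨⟨X, hX⟩, funext fun i => hXv i⟩

end Interpolation

section InterpolationEnergy

variable {F : Type*} [NormedAddCommGroup F] [InnerProductSpace ℝ F] {ι : Type*} [Finite ι]

def interpolationEnergy {T : ℝ} (hT : 0 ≤ T) {v : ι → ℝ} (hv : Function.Injective v) :
    QuadraticForm ℝ (ι → F) :=
  have hnonneg (X : contDiffSubmodule F 2) : 0 ≤ bendingEnergy T (X : ℝ → F) :=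
    bendingEnergy_nonneg hT
  have hpar (X Y : contDiffSubmodule F 2) :
      bendingEnergy T ((X + Y : contDiffSubmodule F 2) : ℝ → F) +
          bendingEnergy T ((X - Y : contDiffSubmodule F 2) : ℝ → F) =
        2 * bendingEnergy T (X : ℝ → F) + 2 * bendingEnergy T (Y : ℝ → F) := by
    rw [Submodule.coe_add, Submodule.coe_sub]
    exact bendingEnergy_add_add_sub X.2 Y.2
  have hsmul (a : ℝ) (X : contDiffSubmodule F 2) :
      bendingEnergy T ((a • X : contDiffSubmodule F 2) : ℝ → F) =
        a ^ 2 * bendingEnergy T (X : ℝ → F) := by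
    rw [Submodule.coe_smul]
    exact bendingEnergy_smul a (X : ℝ → F)
  QuadraticForm.ofParallelogram
    (f := fibreInf (fun X : contDiffSubmodule F 2 => bendingEnergy T (X : ℝ → F)) (sampleAt v))
    (fibreInf_add_add_sub (sampleAt_surjective hv) hnonneg hpar hsmul)
    (fibreInf_nonneg hnonneg) (fibreInf_smul hnonneg hsmul)

theorem coe_interpolationEnergy {T : ℝ} (hT : 0 ≤ T) {v : ι → ℝ} (hv : Function.Injective v) :
    ⇑(interpolationEnergy (F := F) hT hv) =
      fibreInf (fun X : contDiffSubmodule F 2 => bendingEnergy T (X : ℝ → F)) (sampleAt v) :=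
  rfl

end InterpolationEnergy

theorem multiCost_eq_interpolationEnergy (d N : ℕ) :
    multiCost (d := d) N = ⇑(interpolationEnergy (Nat.cast_nonneg N)
      (Nat.cast_injective.comp Fin.val_injective :
        Function.Injective fun i : Fin (N + 1) => ((i : ℕ) : ℝ))) := by
  have hderiv (X : ℝ → EuclideanSpace ℝ (Fin d)) : deriv (deriv X) = iteratedDeriv 2 X := by
    rw [iteratedDeriv_succ', iteratedDeriv_one]
  funext x
  rw [coe_interpolationEnergy, fibreInf]
  refine congrArg sInf (Set.ext fun y => ⟨?_, ?_⟩)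
  · rintro ⟨X, hX, hXi, rfl⟩
    exact ⟨⟨X, hX⟩, funext hXi, by simp [bendingEnergy, hderiv]⟩
  · rintro ⟨⟨X, hX⟩, hXi, rfl⟩
    exact ⟨X, hX, congrFun hXi, by simp [bendingEnergy, hderiv]⟩

theorem multiCost_nonneg {d : ℕ} (N : ℕ) (x : Fin (N + 1) → EuclideanSpace ℝ (Fin d)) :
    0 ≤ multiCost N x :=
  Real.sInf_nonneg <| by
    rintro _ ⟨X, -, -, rfl⟩
    exact intervalIntegral.integral_nonneg (Nat.cast_nonneg N) fun _ _ => sq_nonneg _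

def flattenLinearEquiv (ι κ : Type*) : (ι → EuclideanSpace ℝ κ) ≃ₗ[ℝ] (ι × κ → ℝ) where
  toFun x a := x a.1 a.2
  invFun v i := WithLp.toLp 2 fun j => v (i, j)
  map_add' _ _ := rfl
  map_smul' _ _ := rfl
  left_inv _ := rfl
  right_inv _ := rfl

theorem stmt19_general (d N : ℕ) :
    ∃ R : Matrix (Fin (N + 1) × Fin d) (Fin (N + 1) × Fin d) ℝ,
      R.PosSemidef ∧
      (∀ x : Fin (N + 1) → EuclideanSpace ℝ (Fin d),
        multiCost N x = (fun a : Fin (N + 1) × Fin d => x a.1 a.2) ⬝ᵥ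
          R.mulVec (fun a : Fin (N + 1) × Fin d => x a.1 a.2)) ∧
      Continuous (multiCost (d := d) N) ∧
      (∀ x : Fin (N + 1) → EuclideanSpace ℝ (Fin d), 0 ≤ multiCost N x) := by
  obtain ⟨Q, hQ⟩ : ∃ Q : QuadraticForm ℝ (Fin (N + 1) → EuclideanSpace ℝ (Fin d)),
      ⇑Q = multiCost N :=
    ⟨_, (multiCost_eq_interpolationEnergy d N).symm⟩
  have hnonneg : ∀ x, 0 ≤ Q x := hQ ▸ multiCost_nonneg N
  let b := Module.Basis.ofEquivFun (flattenLinearEquiv (Fin (N + 1)) (Fin d))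
  rw [← hQ]
  refine ⟨Q.toMatrix b, Q.posSemidef_toMatrix b hnonneg, fun x => ?_,
    Q.continuous_of_finiteDimensional, hnonneg⟩
  rw [Q.apply_eq_dotProduct_toMatrix_mulVec b, Module.Basis.equivFun_ofEquivFun]
  rfl

/-- There is a symmetric PSD matrix `R` with `𝒞(x₀,…,x_N) = xᵀRx` for the concatenated
vector `x`; in particular `𝒞` is a continuous nonnegative quadratic form. -/
theorem stmt19 (d N : ℕ) (hd : 1 ≤ d) (hN : 1 ≤ N) :
    ∃ R : Matrix (Fin (N + 1) × Fin d) (Fin (N + 1) × Fin d) ℝ,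
      R.PosSemidef ∧
      (∀ x : Fin (N + 1) → EuclideanSpace ℝ (Fin d),
        multiCost N x = (fun a : Fin (N + 1) × Fin d => x a.1 a.2) ⬝ᵥ
          R.mulVec (fun a : Fin (N + 1) × Fin d => x a.1 a.2)) ∧
      Continuous (multiCost (d := d) N) ∧
      (∀ x : Fin (N + 1) → EuclideanSpace ℝ (Fin d), 0 ≤ multiCost N x) :=
  stmt19_general d N
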